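/- The function x ↦ (Δ'(x)(x² + a²cos²θ) − 4xΔ(x)) / (4x√(Δ(x)) a sinθ) has derivative (x² + a²cos²θ)((M − x)³ − M(M² − a²)) / (2x²Δ(x)^{3/2} a sinθ), which is strictly negative for x ∈ (r₊, ∞); moreover the function tends to +∞ as x → r₊⁺ and to −∞ as x → ∞. Hence it is a strictly decreasing bijection from (r₊, ∞) onto ℝ. -/

import Mathlib

open Filter Topology Set

/-!
The derivative formula is a quotient-rule computation that holds for an arbitrary constant `c`
in place of `a² cos² θ`; its sign is that of `(M − x)³ − M(M² − a²) < 0`. At the horizon the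
numerator of `ψ` tends to `2√(M² − a²)(r₊² + c) > 0` while the denominator tends to `0⁺`. At
infinity `ψ(x) = x · P(1/x) / (4k√(g(1/x)))` for polynomials `P`, `g` with `P(0) = −2`,
`g(0) = 1`, so `ψ → −∞`. A continuous strictly decreasing function on `(r₊, ∞)` with these
limits at the ends is a bijection onto `ℝ` by the intermediate value theorem.
-/

noncomputable def kerrDelta (M a x : ℝ) : ℝ := x ^ 2 - 2 * M * x + a ^ 2

/-- `ψ` with `c` standing for `a² cos² θ` and `k` for `a sin θ`. -/
noncomputable def kerrPsi (M a c k x : ℝ) : ℝ :=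
  ((2 * x - 2 * M) * (x ^ 2 + c) - 4 * x * kerrDelta M a x) /
    (4 * x * √(kerrDelta M a x) * k)

theorem bijOn_Ioi_univ_of_strictAntiOn {α δ : Type*} [ConditionallyCompleteLinearOrder α]
    [TopologicalSpace α] [OrderTopology α] [DenselyOrdered α] [NoMaxOrder α]
    [LinearOrder δ] [TopologicalSpace δ] [OrderClosedTopology δ]
    {f : α → δ} {r : α} (hf : StrictAntiOn f (Ioi r)) (hcont : ContinuousOn f (Ioi r))
    (hr : Tendsto f (𝓝[>] r) atTop) (htop : Tendsto f atTop atBot) :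
    BijOn f (Ioi r) univ := by
  refine ⟨mapsTo_univ _ _, hf.injOn, fun y _ => ?_⟩
  obtain ⟨x₁, hx₁y, hx₁⟩ := ((hr.eventually_ge_atTop y).and self_mem_nhdsWithin).exists
  obtain ⟨x₂, hx₂y, hx₂⟩ := ((htop.eventually_le_atBot y).and (eventually_ge_atTop x₁)).exists
  have hsub : Icc x₁ x₂ ⊆ Ioi r := fun z hz => lt_of_lt_of_le hx₁ hz.1
  obtain ⟨z, hz, hfz⟩ := intermediate_value_Icc' hx₂ (hcont.mono hsub) ⟨hx₂y, hx₁y⟩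
  exact ⟨z, hsub hz, hfz⟩

section
variable {M a c k : ℝ}

theorem lt_of_horizon_lt {x : ℝ} (hx : M + √(M ^ 2 - a ^ 2) < x) : M < x := by
  linarith [Real.sqrt_nonneg (M ^ 2 - a ^ 2)]

theorem kerrDelta_pos_of_horizon_lt {x : ℝ} (hx : M + √(M ^ 2 - a ^ 2) < x) :
    0 < kerrDelta M a x := by
  have := (Real.sqrt_lt' (sub_pos.2 (lt_of_horizon_lt hx))).1 (by linarith)
  unfold kerrDelta
  nlinarith

theorem kerrDelta_horizon (h : a ^ 2 ≤ M ^ 2) : kerrDelta M a (M + √(M ^ 2 - a ^ 2)) = 0 := by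
  unfold kerrDelta
  linear_combination Real.sq_sqrt (sub_nonneg.2 h)

@[fun_prop]
theorem continuous_kerrDelta : Continuous (kerrDelta M a) := by
  unfold kerrDelta; fun_prop

theorem hasDerivAt_kerrDelta (x : ℝ) : HasDerivAt (kerrDelta M a) (2 * x - 2 * M) x := by
  unfold kerrDelta
  simpa [mul_comm] using
    ((hasDerivAt_pow 2 x).sub ((hasDerivAt_id' x).const_mul (2 * M))).add_const (a ^ 2)

theorem hasDerivAt_kerrPsi {x : ℝ} (hx : 0 < x) (hΔ : 0 < kerrDelta M a x) :
    HasDerivAt (kerrPsi M a c k)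
      ((x ^ 2 + c) * ((M - x) ^ 3 - M * (M ^ 2 - a ^ 2)) /
        (2 * x ^ 2 * √(kerrDelta M a x ^ 3) * k)) x := by
  have h2 : HasDerivAt (fun y : ℝ => 2 * y) 2 x := by simpa using (hasDerivAt_id' x).const_mul 2
  have h4 : HasDerivAt (fun y : ℝ => 4 * y) 4 x := by simpa using (hasDerivAt_id' x).const_mul 4
  have hnum : HasDerivAt (fun y => (2 * y - 2 * M) * (y ^ 2 + c) - 4 * y * kerrDelta M a y)
      (2 * (x ^ 2 + c) + (2 * x - 2 * M) * (2 * x) -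
        (4 * kerrDelta M a x + 4 * x * (2 * x - 2 * M))) x :=
    ((h2.sub_const _).mul (by simpa using (hasDerivAt_pow 2 x).add_const c)).sub
      (h4.mul (hasDerivAt_kerrDelta x))
  have hden : HasDerivAt (fun y => 4 * y * √(kerrDelta M a y))
      (4 * √(kerrDelta M a x) + 4 * x * ((2 * x - 2 * M) / (2 * √(kerrDelta M a x)))) x :=
    h4.mul ((hasDerivAt_kerrDelta x).sqrt hΔ.ne')
  have hψ : kerrPsi M a c k = fun y =>
      ((2 * y - 2 * M) * (y ^ 2 + c) - 4 * y * kerrDelta M a y) /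
        (4 * y * √(kerrDelta M a y)) / k := by
    ext y; rw [kerrPsi, div_div]
  rw [hψ]
  refine ((hnum.div hden (by positivity)).div_const k).congr_deriv ?_
  rw [← div_div _ (2 * x ^ 2 * √(kerrDelta M a x ^ 3)) k]
  congr 1
  have hu2 := Real.sq_sqrt hΔ.le
  have hu3 : √(kerrDelta M a x ^ 3) = √(kerrDelta M a x) ^ 3 := by
    rw [Real.sqrt_eq_iff_eq_sq (by positivity) (by positivity), ← pow_mul, mul_comm, pow_mul, hu2]
  obtain ⟨u, hu, hu_def⟩ : ∃ u, 0 < u ∧ √(kerrDelta M a x) = u := ⟨_, Real.sqrt_pos.2 hΔ, rfl⟩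
  rw [hu3, hu_def, ← hu2, hu_def]
  have ha2 : a ^ 2 = u ^ 2 - x ^ 2 + 2 * M * x := by rw [← hu_def, hu2, kerrDelta]; ring
  rw [ha2]
  field_simp
  ring

theorem deriv_kerrPsi_neg (hM : 0 ≤ M) (haM : a ^ 2 ≤ M ^ 2) (hc : 0 ≤ c) (hk : 0 < k)
    {x : ℝ} (hx : M + √(M ^ 2 - a ^ 2) < x) : deriv (kerrPsi M a c k) x < 0 := by
  have hxM := lt_of_horizon_lt hx
  have hx0 : 0 < x := hM.trans_lt hxM
  have hΔ := kerrDelta_pos_of_horizon_lt hx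
  have hcube : (M - x) ^ 3 < 0 := Odd.pow_neg (by decide) (by linarith)
  have hroot : 0 < √(kerrDelta M a x ^ 3) := Real.sqrt_pos.2 (by positivity)
  rw [(hasDerivAt_kerrPsi hx0 hΔ).deriv]
  refine div_neg_of_neg_of_pos (mul_neg_of_pos_of_neg (by positivity) ?_) (by positivity)
  nlinarith [mul_nonneg hM (sub_nonneg.2 haM)]

theorem tendsto_kerrPsi_nhdsGT_horizon (hM : 0 ≤ M) (haM : a ^ 2 < M ^ 2) (hc : 0 ≤ c)
    (hk : 0 < k) : Tendsto (kerrPsi M a c k) (𝓝[>] (M + √(M ^ 2 - a ^ 2))) atTop := by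
  set r := M + √(M ^ 2 - a ^ 2)
  have hs : 0 < √(M ^ 2 - a ^ 2) := Real.sqrt_pos.2 (by linarith)
  have hr : 0 < r := by positivity
  have hΔr : kerrDelta M a r = 0 := kerrDelta_horizon haM.le
  have hnum : Tendsto (fun x => (2 * x - 2 * M) * (x ^ 2 + c) - 4 * x * kerrDelta M a x)
      (𝓝[>] r) (𝓝 (2 * √(M ^ 2 - a ^ 2) * (r ^ 2 + c))) := by
    refine tendsto_nhdsWithin_of_tendsto_nhds ?_
    have hcont : Continuous fun x => (2 * x - 2 * M) * (x ^ 2 + c) - 4 * x * kerrDelta M a x := by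
      fun_prop
    convert hcont.tendsto r using 2
    rw [hΔr]; ring
  have hden : Tendsto (fun x => 4 * x * √(kerrDelta M a x) * k) (𝓝[>] r) (𝓝[>] 0) := by
    refine tendsto_nhdsWithin_iff.2 ⟨tendsto_nhdsWithin_of_tendsto_nhds ?_, ?_⟩
    · have hcont : Continuous fun x => 4 * x * √(kerrDelta M a x) * k := by fun_prop
      convert hcont.tendsto r using 2
      rw [hΔr, Real.sqrt_zero]; ring
    · filter_upwards [self_mem_nhdsWithin] with x (hx : r < x)
      have := Real.sqrt_pos.2 (kerrDelta_pos_of_horizon_lt hx)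
      have : 0 < x := hr.trans hx
      exact mem_Ioi.2 (by positivity)
  have hlimit : 0 < 2 * √(M ^ 2 - a ^ 2) * (r ^ 2 + c) := by positivity
  exact (hnum.pos_mul_atTop hlimit (tendsto_inv_nhdsGT_zero.comp hden)).congr
    fun x => (div_eq_mul_inv _ _).symm

theorem tendsto_kerrPsi_atTop (hk : 0 < k) : Tendsto (kerrPsi M a c k) atTop atBot := by
  set g : ℝ → ℝ := fun t => 1 - 2 * M * t + a ^ 2 * t ^ 2
  set P : ℝ → ℝ := fun t => -2 + 6 * M * t + (2 * c - 4 * a ^ 2) * t ^ 2 - 2 * M * c * t ^ 3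
  have hlim : Tendsto (fun x : ℝ => P x⁻¹ / (4 * √(g x⁻¹) * k)) atTop (𝓝 (-2 / (4 * k))) := by
    have hcont : ContinuousAt (fun t => P t / (4 * √(g t) * k)) 0 :=
      ContinuousAt.div (by fun_prop) (by fun_prop) (by simp [g]; positivity)
    have h0 : P 0 / (4 * √(g 0) * k) = -2 / (4 * k) := by simp [P, g]
    rw [← h0]
    exact hcont.tendsto.comp tendsto_inv_atTop_zero
  have hneg : -2 / (4 * k) < 0 := div_neg_of_neg_of_pos (by norm_num) (by positivity)
  refine (tendsto_id.atTop_mul_neg hneg hlim).congr' ?_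
  filter_upwards [eventually_gt_atTop 0, eventually_gt_atTop (M + √(M ^ 2 - a ^ 2))]
    with x hx hxr
  have hΔ := kerrDelta_pos_of_horizon_lt hxr
  have hg : kerrDelta M a x = x ^ 2 * g x⁻¹ := by simp only [g, kerrDelta]; field_simp
  have hsq : √(kerrDelta M a x) = x * √(g x⁻¹) := by
    rw [hg, Real.sqrt_mul (sq_nonneg x), Real.sqrt_sq hx.le]
  have hgpos : 0 < √(g x⁻¹) := Real.sqrt_pos.2 (pos_of_mul_pos_right (hg ▸ hΔ) (sq_nonneg x))
  rw [id, kerrPsi, hsq, hg]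
  simp only [P, g] at hgpos ⊢
  field_simp
  ring
end

theorem psi_parametrization_bijective_general (M a θ : ℝ)
    (ha : 0 < a) (haM : a < M) (hθ : θ ∈ Set.Ioo 0 Real.pi)
    (Δ : ℝ → ℝ) (hΔ : ∀ x, Δ x = x ^ 2 - 2 * M * x + a ^ 2)
    (rp : ℝ) (hrp : rp = M + Real.sqrt (M ^ 2 - a ^ 2))
    (f : ℝ → ℝ)
    (hf : ∀ x, f x = ((2 * x - 2 * M) * (x ^ 2 + a ^ 2 * Real.cos θ ^ 2) -
      4 * x * Δ x) / (4 * x * Real.sqrt (Δ x) * a * Real.sin θ)) :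
    (∀ x ∈ Set.Ioi rp,
      deriv f x = (x ^ 2 + a ^ 2 * Real.cos θ ^ 2) *
        ((M - x) ^ 3 - M * (M ^ 2 - a ^ 2)) /
        (2 * x ^ 2 * Real.sqrt (Δ x ^ 3) * a * Real.sin θ) ∧
      deriv f x < 0) ∧
    Tendsto f (𝓝[>] rp) atTop ∧
    Tendsto f atTop atBot ∧
    StrictAntiOn f (Set.Ioi rp) ∧
    Set.BijOn f (Set.Ioi rp) Set.univ := by
  have hM : 0 ≤ M := by linarith
  have haM2 : a ^ 2 < M ^ 2 := by nlinarith
  have hk : 0 < a * Real.sin θ := mul_pos ha (Real.sin_pos_of_pos_of_lt_pi hθ.1 hθ.2)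
  have hc : 0 ≤ a ^ 2 * Real.cos θ ^ 2 := by positivity
  obtain rfl : Δ = kerrDelta M a := funext hΔ
  obtain rfl : f = kerrPsi M a (a ^ 2 * Real.cos θ ^ 2) (a * Real.sin θ) := by
    ext x; rw [hf, kerrPsi, mul_assoc _ a]
  subst hrp
  set ψ := kerrPsi M a (a ^ 2 * Real.cos θ ^ 2) (a * Real.sin θ)
  have hderiv : ∀ x ∈ Ioi (M + √(M ^ 2 - a ^ 2)), HasDerivAt ψ
      ((x ^ 2 + a ^ 2 * Real.cos θ ^ 2) * ((M - x) ^ 3 - M * (M ^ 2 - a ^ 2)) /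
        (2 * x ^ 2 * √(kerrDelta M a x ^ 3) * (a * Real.sin θ))) x := fun x hx =>
    hasDerivAt_kerrPsi (hM.trans_lt (lt_of_horizon_lt hx)) (kerrDelta_pos_of_horizon_lt hx)
  have hneg : ∀ x ∈ Ioi (M + √(M ^ 2 - a ^ 2)), deriv ψ x < 0 := fun x hx =>
    deriv_kerrPsi_neg hM haM2.le hc hk hx
  have hcont : ContinuousOn ψ (Ioi (M + √(M ^ 2 - a ^ 2))) :=
    fun x hx => (hderiv x hx).continuousAt.continuousWithinAt
  have hanti := strictAntiOn_of_deriv_neg (convex_Ioi _) hcont (by rwa [interior_Ioi])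
  have hleft : Tendsto ψ _ _ := tendsto_kerrPsi_nhdsGT_horizon hM haM2 hc hk
  have hright : Tendsto ψ _ _ := tendsto_kerrPsi_atTop hk
  refine ⟨fun x hx => ⟨by rw [(hderiv x hx).deriv, mul_assoc _ a], hneg x hx⟩,
    hleft, hright, hanti, bijOn_Ioi_univ_of_strictAntiOn hanti hcont hleft hright⟩

/-- The parametrization function `ψ(x)`: the function
`x ↦ (Δ'(x)(x² + a²cos²θ) − 4xΔ(x)) / (4x√(Δ(x)) a sinθ)` has on `(r₊,∞)` the
derivative `(x² + a²cos²θ)((M − x)³ − M(M² − a²)) / (2x²√(Δ(x)³) a sinθ)`,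
which is strictly negative; it tends to `+∞` as `x → r₊⁺` and to `−∞` as
`x → ∞`; hence it is a strictly decreasing bijection from `(r₊,∞)` onto `ℝ`. -/
theorem psi_parametrization_bijective (M a θ : ℝ) (hM : 0 < M)
    (ha : 0 < a) (haM : a < M) (hθ : θ ∈ Set.Ioo 0 Real.pi)
    (Δ : ℝ → ℝ) (hΔ : ∀ x, Δ x = x ^ 2 - 2 * M * x + a ^ 2)
    (rp : ℝ) (hrp : rp = M + Real.sqrt (M ^ 2 - a ^ 2))
    (f : ℝ → ℝ)
    (hf : ∀ x, f x = ((2 * x - 2 * M) * (x ^ 2 + a ^ 2 * Real.cos θ ^ 2) -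
      4 * x * Δ x) / (4 * x * Real.sqrt (Δ x) * a * Real.sin θ)) :
    (∀ x ∈ Set.Ioi rp,
      deriv f x = (x ^ 2 + a ^ 2 * Real.cos θ ^ 2) *
        ((M - x) ^ 3 - M * (M ^ 2 - a ^ 2)) /
        (2 * x ^ 2 * Real.sqrt (Δ x ^ 3) * a * Real.sin θ) ∧
      deriv f x < 0) ∧
    Tendsto f (𝓝[>] rp) atTop ∧
    Tendsto f atTop atBot ∧
    StrictAntiOn f (Set.Ioi rp) ∧
    Set.BijOn f (Set.Ioi rp) Set.univ :=
  psi_parametrization_bijective_general M a θ ha haM hθ Δ hΔ rp hrp f hf
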